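/- In the lattice of bi-leveled trees, the meet of (t;T) and (s;S) is (inf{t,s}; V), where inf{t,s} is the meet in the Tamari lattice and V is the upper order ideal generated by T ∪ S in the node poset of inf{t,s}, i.e. V = T ∪ S ∪ {x | x > y for some y ∈ T ∪ S}. -/

import Mathlib

/-- Planar rooted binary trees. -/
inductive PBT : Type
  | leaf : PBT
  | node : PBT → PBT → PBT
deriving DecidableEq

namespace PBT

/-- Number of internal nodes. -/
def numNodes : PBT → ℕ
  | leaf => 0
  | node l r => numNodes l + numNodes r + 1

/-- Number of leaves. -/
def numLeaves : PBT → ℕ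
  | leaf => 1
  | node l r => numLeaves l + numLeaves r

/-- A single left-to-right (Tamari) rotation somewhere in a tree. -/
inductive Rot : PBT → PBT → Prop
  | here (a b c : PBT) : Rot (node (node a b) c) (node a (node b c))
  | left {l l' : PBT} (r : PBT) : Rot l l' → Rot (node l r) (node l' r)
  | right (l : PBT) {r r' : PBT} : Rot r r' → Rot (node l r) (node l r')

/-- The Tamari order: reflexive-transitive closure of rotations. -/
def tamariLE : PBT → PBT → Prop := Relation.ReflTransGen Rot

/-- Positions of internal nodes as paths from the root
(`false` = go left, `true` = go right). -/
def isNode : PBT → List Bool → Prop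
  | leaf, _ => False
  | node _ _, [] => True
  | node l _, (false :: p) => isNode l p
  | node _ r, (true :: p) => isNode r p

/-- 1-based left-to-right (in-order) index of a node position. -/
def idx : PBT → List Bool → ℕ
  | leaf, _ => 0
  | node l _, [] => numNodes l + 1
  | node l _, (false :: p) => idx l p
  | node l r, (true :: p) => numNodes l + 1 + idx r p

/-- `nodeLE t i j` : in the node poset of `t` (root maximal, a node is below all
of its ancestors), the node with in-order index `i` is ≤ the node with index `j`
(i.e. the position of `j` is a prefix of the position of `i`). -/
def nodeLE (t : PBT) (i j : ℕ) : Prop :=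
  ∃ p q : List Bool, isNode t p ∧ isNode t q ∧ idx t p = i ∧ idx t q = j ∧ q <+: p

end PBT

/-- Bi-leveled trees with `n` internal nodes: a planar binary tree together with
an upper order ideal `T` of its node poset (nodes indexed `1,…,n` left to right)
containing the leftmost node (index 1) as a minimal element. -/
structure BLT (n : ℕ) where
  t : PBT
  hn : t.numNodes = n
  T : Set ℕ
  hsub : T ⊆ Set.Icc 1 n
  hideal : ∀ i j, PBT.nodeLE t i j → i ∈ T → j ∈ T
  hone : (1 : ℕ) ∈ T
  hmin : ∀ i ∈ T, PBT.nodeLE t i 1 → i = 1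

/-- The partial order on bi-leveled trees: `(s;S) ≤ (t;T)` iff `s ≤ t` in the
Tamari order and `T ⊆ S`. -/
instance BLT.instPreorder (n : ℕ) : Preorder (BLT n) where
  le x y := PBT.tamariLE x.t y.t ∧ y.T ⊆ x.T
  le_refl x := ⟨Relation.ReflTransGen.refl, le_refl _⟩
  le_trans x y z h h' := ⟨h.1.trans h'.1, h'.2.trans h.2⟩

/-- Trees with `n` internal nodes, as a preorder under the Tamari order. -/
instance Yn.instPreorder (n : ℕ) : Preorder {t : PBT // t.numNodes = n} where
  le x y := PBT.tamariLE x.1 y.1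
  le_refl x := Relation.ReflTransGen.refl
  le_trans x y z h h' := Relation.ReflTransGen.trans h h'

/-!
The subtree of node `i` of a binary tree `t` is the set of nodes with in-order indices in an
interval `[subtreeFirst t i, subtreeLast t i]`, and `j ≤ i` in the node poset iff `j` lies in that
interval. A rotation `(ab)c → a(bc)` moves both endpoints of every such interval to the right, so
going up in the Tamari order a node can only leave the left subtree of `i` and only enter its right
subtree. Let `(w;W)` be a lower bound of `(x;X)` and `(y;Y)`, so `w ≤ u ≤ x, y`, and let `j < i` or
`i < j` be related in `u`, with `j ∈ X ∪ Y ⊆ W`. If `j < i`, the relation persists down to `w` and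
`i ∈ W`; if `i < j`, it persists up to `x` (or `y`), so `i ∈ X` (or `Y`), hence `i ∈ W`.
-/

namespace PBT

/-- The subtree rooted at node `i` consists of the nodes with in-order indices from
`subtreeFirst t i` to `subtreeLast t i`. When `t` has no node `i`, this interval is the empty
`[i + 1, i]`. -/
def subtreeFirst : PBT → ℕ → ℕ
  | leaf, i => i + 1
  | node l r, i =>
    if i ≤ numNodes l then subtreeFirst l i
    else if i = numNodes l + 1 then 1
    else numNodes l + 1 + subtreeFirst r (i - (numNodes l + 1))

def subtreeLast : PBT → ℕ → ℕ
  | leaf, i => i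
  | node l r, i =>
    if i ≤ numNodes l then subtreeLast l i
    else if i = numNodes l + 1 then numNodes l + numNodes r + 1
    else numNodes l + 1 + subtreeLast r (i - (numNodes l + 1))

lemma subtreeFirst_le_succ (t : PBT) (i : ℕ) : subtreeFirst t i ≤ i + 1 := by
  induction t generalizing i with
  | leaf => rfl
  | node l r ihl ihr =>
    simp only [subtreeFirst]
    grind

lemma le_subtreeLast (t : PBT) (i : ℕ) : i ≤ subtreeLast t i := by
  induction t generalizing i with
  | leaf => rfl
  | node l r ihl ihr =>
    simp only [subtreeLast]
    grind

lemma exists_isNode_idx_iff {t : PBT} {i : ℕ} :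
    (∃ p, isNode t p ∧ idx t p = i) ↔ 1 ≤ i ∧ i ≤ numNodes t := by
  induction t generalizing i with
  | leaf => simp [isNode, numNodes]; omega
  | node l r ihl ihr =>
    constructor
    · rintro ⟨_ | ⟨_ | _, p⟩, hp, rfl⟩
      · simp [idx, numNodes]
      · have := ihl.1 ⟨p, hp, rfl⟩
        simp only [idx, numNodes]; omega
      · have := ihr.1 ⟨p, hp, rfl⟩
        simp only [idx, numNodes]; omega
    · intro hi
      simp only [numNodes] at hi
      by_cases hl : i ≤ numNodes l
      · obtain ⟨p, hp, rfl⟩ := ihl.2 ⟨hi.1, hl⟩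
        exact ⟨false :: p, hp, rfl⟩
      by_cases hroot : i = numNodes l + 1
      · exact ⟨[], trivial, hroot.symm⟩
      · obtain ⟨p, hp, hpi⟩ := (ihr (i := i - (numNodes l + 1))).2 (by omega)
        exact ⟨true :: p, hp, by simp only [idx]; omega⟩

lemma nodeLE.bounds {t : PBT} {i j : ℕ} (h : nodeLE t j i) : 1 ≤ i ∧ i ≤ numNodes t :=
  let ⟨_, q, _, hq, _, hqi, _⟩ := h
  exists_isNode_idx_iff.1 ⟨q, hq, hqi⟩

lemma nodeLE_node_iff {l r : PBT} {i j : ℕ} :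
    nodeLE (node l r) j i ↔
      (i = numNodes l + 1 ∧ 1 ≤ j ∧ j ≤ numNodes l + numNodes r + 1) ∨ nodeLE l j i ∨
        ∃ i' j', i = numNodes l + 1 + i' ∧ j = numNodes l + 1 + j' ∧ nodeLE r j' i' := by
  constructor
  · rintro ⟨p, _ | ⟨_ | _, q⟩, hp, hq, rfl, rfl, hqp⟩
    · exact .inl ⟨rfl, exists_isNode_idx_iff.1 ⟨p, hp, rfl⟩⟩
    all_goals obtain ⟨s, rfl⟩ := hqp
    · exact .inr (.inl ⟨_, q, hp, hq, rfl, rfl, List.prefix_append _ _⟩)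
    · exact .inr (.inr ⟨_, _, rfl, rfl, _, q, hp, hq, rfl, rfl, List.prefix_append _ _⟩)
  · rintro (⟨rfl, hj⟩ | ⟨p, q, hp, hq, rfl, rfl, hqp⟩ | ⟨_, _, rfl, rfl, p, q, hp, hq, rfl, rfl, hqp⟩)
    · obtain ⟨p, hp, rfl⟩ := (exists_isNode_idx_iff (t := node l r)).2 hj
      exact ⟨p, [], hp, trivial, rfl, rfl, List.nil_prefix⟩
    · exact ⟨false :: p, false :: q, hp, hq, rfl, rfl, List.cons_prefix_cons.2 ⟨rfl, hqp⟩⟩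
    · exact ⟨true :: p, true :: q, hp, hq, rfl, rfl, List.cons_prefix_cons.2 ⟨rfl, hqp⟩⟩

theorem nodeLE_iff {t : PBT} {i j : ℕ} :
    nodeLE t j i ↔ subtreeFirst t i ≤ j ∧ j ≤ subtreeLast t i := by
  induction t generalizing i j with
  | leaf => simp [nodeLE, isNode, subtreeFirst, subtreeLast]
  | node l r ihl ihr =>
    rw [nodeLE_node_iff]
    simp only [subtreeFirst, subtreeLast]
    split_ifs with hl hroot
    · rw [← ihl]
      constructor
      · rintro (⟨rfl, -⟩ | h | ⟨i', j', rfl, rfl, -⟩)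
        · omega
        · exact h
        · omega
      · exact fun h => .inr (.inl h)
    · constructor
      · rintro (⟨-, hj⟩ | h | ⟨i', j', rfl, rfl, h⟩)
        · exact hj
        · exact absurd h.bounds.2 hl
        · have := h.bounds.1
          omega
      · exact fun hj => .inl ⟨hroot, hj⟩
    · constructor
      · rintro (⟨rfl, -⟩ | h | ⟨i', j', rfl, rfl, h⟩)
        · omega
        · exact absurd h.bounds.2 hl
        · rw [ihr] at h
          simp only [Nat.add_sub_cancel_left]
          omega
      · intro h
        exact .inr (.inr ⟨i - (numNodes l + 1), j - (numNodes l + 1), by omega, by omega,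
          ihr.2 (by omega)⟩)

lemma Rot.numNodes_eq {t t' : PBT} (h : Rot t t') : numNodes t = numNodes t' := by
  induction h <;> simp only [numNodes] at * <;> omega

lemma Rot.subtreeFirst_le {t t' : PBT} (h : Rot t t') (i : ℕ) :
    subtreeFirst t i ≤ subtreeFirst t' i := by
  induction h generalizing i with
  | here => simp only [subtreeFirst, numNodes]; grind
  | left _ h ih | right _ h ih => simp only [subtreeFirst, h.numNodes_eq]; grind

lemma Rot.subtreeLast_le {t t' : PBT} (h : Rot t t') (i : ℕ) :
    subtreeLast t i ≤ subtreeLast t' i := by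
  induction h generalizing i with
  | here => simp only [subtreeLast, numNodes]; grind
  | left _ h ih | right _ h ih => simp only [subtreeLast, h.numNodes_eq]; grind

lemma tamariLE.subtreeFirst_le {t t' : PBT} (h : tamariLE t t') (i : ℕ) :
    subtreeFirst t i ≤ subtreeFirst t' i := by
  induction h with
  | refl => rfl
  | tail _ hrot ih => exact ih.trans (hrot.subtreeFirst_le i)

lemma tamariLE.subtreeLast_le {t t' : PBT} (h : tamariLE t t') (i : ℕ) :
    subtreeLast t i ≤ subtreeLast t' i := by
  induction h with
  | refl => rfl
  | tail _ hrot ih => exact ih.trans (hrot.subtreeLast_le i)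

lemma tamariLE.nodeLE_of_lt {t t' : PBT} (h : tamariLE t t') {i j : ℕ} (hji : j < i)
    (h' : nodeLE t' j i) : nodeLE t j i := by
  rw [nodeLE_iff] at h' ⊢
  exact ⟨(h.subtreeFirst_le i).trans h'.1, hji.le.trans (le_subtreeLast t i)⟩

lemma tamariLE.nodeLE_of_gt {t t' : PBT} (h : tamariLE t t') {i j : ℕ} (hij : i < j)
    (h' : nodeLE t j i) : nodeLE t' j i := by
  rw [nodeLE_iff] at h' ⊢
  exact ⟨(subtreeFirst_le_succ t' i).trans hij, h'.2.trans (h.subtreeLast_le i)⟩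

end PBT

/-- In the lattice of bi-leveled trees, the meet of `(t;T)` and `(s;S)` is
`(inf{t,s}; V)` where `inf{t,s}` is the meet in the Tamari lattice and `V` is
the upper order ideal generated by `T ∪ S` in the node poset of `inf{t,s}`:
`V = T ∪ S ∪ {i | i > j for some j ∈ T ∪ S}`. -/
theorem BLT_meet (n : ℕ) (x y : BLT n) (u : {t : PBT // t.numNodes = n})
    (hu : IsGLB {(⟨x.t, x.hn⟩ : {t : PBT // t.numNodes = n}), ⟨y.t, y.hn⟩} u)
    (z : BLT n) (hzt : z.t = u.1)
    (hzT : z.T = x.T ∪ y.T ∪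
      {i : ℕ | ∃ j ∈ x.T ∪ y.T, PBT.nodeLE u.1 j i ∧ i ≠ j}) :
    IsGLB {x, y} z := by
  have hux : PBT.tamariLE u.1 x.t := hu.1 (Set.mem_insert _ _)
  have huy : PBT.tamariLE u.1 y.t := hu.1 (Set.mem_insert_of_mem _ rfl)
  have hTz : x.T ∪ y.T ⊆ z.T := hzT ▸ Set.subset_union_left
  refine ⟨?_, fun w hw => ?_⟩
  · rintro b (rfl | rfl)
    · exact ⟨hzt ▸ hux, Set.subset_union_left.trans hTz⟩
    · exact ⟨hzt ▸ huy, Set.subset_union_right.trans hTz⟩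
  have hwx : w ≤ x := hw (Set.mem_insert _ _)
  have hwy : w ≤ y := hw (Set.mem_insert_of_mem _ rfl)
  have hwu : PBT.tamariLE w.t u.1 :=
    hu.2 (show (⟨w.t, w.hn⟩ : {t : PBT // t.numNodes = n}) ∈ lowerBounds _ by
      rintro b (rfl | rfl); exacts [hwx.1, hwy.1])
  refine ⟨hzt ▸ hwu, ?_⟩
  rw [hzT]
  rintro i ((hi | hi) | ⟨j, hj, hji, hne⟩)
  · exact hwx.2 hi
  · exact hwy.2 hi
  rcases hne.lt_or_gt with hij | hij
  · rcases hj with hj | hj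
    · exact hwx.2 (x.hideal j i (hux.nodeLE_of_gt hij hji) hj)
    · exact hwy.2 (y.hideal j i (huy.nodeLE_of_gt hij hji) hj)
  · exact w.hideal j i (hwu.nodeLE_of_lt hij hji) (Set.union_subset hwx.2 hwy.2 hj)
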